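/- If a measurable set Ω ⊆ ℝ tiles ℝ by {0, 1, …, p−1}, and Ω₀ := Ω ∩ [0, p), then Ω₀ tiles ℝ by ℤ; in particular Ω₀ has Lebesgue measure 1. -/
import Mathlib


open MeasureTheory Set Pointwise
noncomputable section

/-- Translate of a set of reals by `t`. -/
def tr (t : ℝ) (A : Set ℝ) : Set ℝ := (fun x => x + t) '' A

/-- `Ω` tiles `ℝ` by translations by `{0, 1, …, p-1}`. -/
def TilesByFin (Ω : Set ℝ) (p : ℕ) : Prop :=
  (∀ j j' : ℕ, j < p → j' < p → j ≠ j' →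
      volume (tr (j : ℝ) Ω ∩ tr (j' : ℝ) Ω) = 0) ∧
  volume ((⋃ j ∈ Finset.range p, tr (j : ℝ) Ω)ᶜ) = 0

/-- `A` tiles `ℝ` by `ℤ`: the integer translates of `A` partition `ℝ` up to
Lebesgue measure zero. -/
def TilesByZ (A : Set ℝ) : Prop :=
  (∀ k l : ℤ, k ≠ l → volume (tr (k : ℝ) A ∩ tr (l : ℝ) A) = 0) ∧
  volume ((⋃ k : ℤ, tr (k : ℝ) A)ᶜ) = 0

lemma mem_tr {t : ℝ} {A : Set ℝ} {x : ℝ} : x ∈ tr t A ↔ x - t ∈ A := by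
  constructor
  · rintro ⟨a, ha, rfl⟩; simpa using ha
  · intro h; exact ⟨x - t, h, by ring⟩

lemma vol_tr (t : ℝ) (A : Set ℝ) : volume (tr t A) = volume A := by
  have h : tr t A = (fun x => x + -t) ⁻¹' A := by
    ext x; rw [mem_tr]; simp [sub_eq_add_neg]
  rw [h, measure_preimage_add_right]

theorem stmt2 (p : ℕ) (hp : 2 ≤ p) (Ω : Set ℝ) (hΩ : MeasurableSet Ω)
    (htile : TilesByFin Ω p) (Ω₀ : Set ℝ) (hΩ₀ : Ω₀ = Ω ∩ Ico 0 (p : ℝ)) :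
    TilesByZ Ω₀ ∧ volume Ω₀ = 1 := by
  obtain ⟨hdisj, hcov⟩ := htile
  have hp0 : 0 < p := by omega
  have hΩ₀sub : Ω₀ ⊆ Ω := hΩ₀ ▸ inter_subset_left
  have hΩ₀Ico : Ω₀ ⊆ Ico 0 (p : ℝ) := hΩ₀ ▸ inter_subset_right
  -- pairwise disjointness of integer translates, ordered case
  have key : ∀ k l : ℤ, k < l → volume (tr (k : ℝ) Ω₀ ∩ tr (l : ℝ) Ω₀) = 0 := by
    intro k l hkl
    by_cases hd : l - k < (p : ℤ)
    · set d : ℕ := (l - k).toNat with hdd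
      have hdpos : 0 < d := by omega
      have hdp : d < p := by omega
      have hdr : (d : ℝ) = (l : ℝ) - (k : ℝ) := by
        have : ((d : ℤ) : ℝ) = ((l - k : ℤ) : ℝ) := by
          congr 1; omega
        push_cast at this ⊢; linarith
      have hsub : tr (k : ℝ) Ω₀ ∩ tr (l : ℝ) Ω₀ ⊆
          tr (k : ℝ) (tr (d : ℝ) Ω ∩ tr ((0:ℕ) : ℝ) Ω) := by
        intro x hx
        obtain ⟨h1, h2⟩ := hx
        rw [mem_tr] at h1 h2
        rw [mem_tr]
        constructor
        · rw [mem_tr]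
          have : x - (k : ℝ) - (d : ℝ) = x - (l : ℝ) := by rw [hdr]; ring
          rw [this]
          exact hΩ₀sub h2
        · rw [mem_tr]
          simpa using hΩ₀sub h1
      refine measure_mono_null hsub ?_
      rw [vol_tr]
      exact hdisj d 0 hdp hp0 (by omega)
    · -- translates too far apart: empty intersection
      have : tr (k : ℝ) Ω₀ ∩ tr (l : ℝ) Ω₀ = ∅ := by
        ext x
        simp only [mem_inter_iff, mem_empty_iff_false, iff_false]
        rintro ⟨h1, h2⟩
        rw [mem_tr] at h1 h2
        obtain ⟨ha0, hap⟩ := hΩ₀Ico h1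
        obtain ⟨hb0, hbp⟩ := hΩ₀Ico h2
        have hlk : (p : ℝ) ≤ (l : ℝ) - (k : ℝ) := by
          have : (p : ℤ) ≤ l - k := by omega
          exact_mod_cast this
        linarith
      rw [this]; simp
  have hZdisj : ∀ k l : ℤ, k ≠ l → volume (tr (k : ℝ) Ω₀ ∩ tr (l : ℝ) Ω₀) = 0 := by
    intro k l hkl
    rcases lt_or_gt_of_ne hkl with h | h
    · exact key k l h
    · rw [inter_comm]; exact key l k h
  -- covering
  set N : Set ℝ := (⋃ j ∈ Finset.range p, tr (j : ℝ) Ω)ᶜ with hN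
  have hZcov : volume ((⋃ k : ℤ, tr (k : ℝ) Ω₀)ᶜ) = 0 := by
    have hsub : (⋃ k : ℤ, tr (k : ℝ) Ω₀)ᶜ ⊆
        ⋃ m : ℤ, tr ((m : ℝ) - ((p : ℝ) - 1)) N := by
      intro x hx
      simp only [mem_compl_iff, mem_iUnion, not_exists] at hx
      refine mem_iUnion.2 ⟨⌊x⌋, ?_⟩
      rw [mem_tr]
      -- z := x - ⌊x⌋ + (p - 1)
      simp only [hN, mem_compl_iff]
      intro hmem
      rw [mem_iUnion₂] at hmem
      obtain ⟨j, hj, hzj⟩ := hmem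
      rw [Finset.mem_range] at hj
      rw [mem_tr] at hzj
      set a : ℝ := x - ((⌊x⌋ : ℝ) - ((p : ℝ) - 1)) - (j : ℝ) with ha
      have hfr0 : (0 : ℝ) ≤ x - ⌊x⌋ := by
        have := Int.floor_le x; linarith
      have hfr1 : x - (⌊x⌋ : ℝ) < 1 := by
        have := Int.lt_floor_add_one x; linarith
      have hjle : (j : ℝ) ≤ (p : ℝ) - 1 := by
        have : (j : ℝ) + 1 ≤ (p : ℝ) := by exact_mod_cast hj
        linarith
      have haIco : a ∈ Ico 0 (p : ℝ) := by
        constructor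
        · rw [ha]; linarith
        · rw [ha]
          have : (0 : ℝ) ≤ (j : ℝ) := Nat.cast_nonneg j
          linarith
      have haΩ₀ : a ∈ Ω₀ := by
        rw [hΩ₀]
        exact ⟨hzj, haIco⟩
      -- so x ∈ tr k Ω₀ with k = ⌊x⌋ - (p-1) + j
      have hp1 : (1 : ℤ) ≤ (p : ℤ) := by exact_mod_cast hp0
      refine hx (⌊x⌋ - ((p : ℤ) - 1) + (j : ℤ)) ?_
      rw [mem_tr]
      have : x - ((⌊x⌋ - ((p : ℤ) - 1) + (j : ℤ) : ℤ) : ℝ) = a := by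
        rw [ha]; push_cast; ring
      rw [this]; exact haΩ₀
    refine measure_mono_null hsub ?_
    refine measure_iUnion_null fun m => ?_
    rw [vol_tr]
    exact hcov
  refine ⟨⟨hZdisj, hZcov⟩, ?_⟩
  -- measure equals 1 via fundamental domains
  have hΩ₀meas : MeasurableSet Ω₀ := by
    rw [hΩ₀]; exact hΩ.inter measurableSet_Ico
  have hfd : IsAddFundamentalDomain (AddSubgroup.zmultiples (1 : ℝ)) Ω₀ volume := by
    constructor
    · exact hΩ₀meas.nullMeasurableSet
    · rw [MeasureTheory.ae_iff]
      refine measure_mono_null ?_ hZcov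
      intro x hx
      simp only [mem_setOf_eq, not_exists] at hx
      simp only [mem_compl_iff, mem_iUnion, not_exists]
      intro k hk
      rw [mem_tr] at hk
      refine hx ⟨(-k) • (1 : ℝ), AddSubgroup.zsmul_mem _ (AddSubgroup.mem_zmultiples _) _⟩ ?_
      show (-k) • (1 : ℝ) + x ∈ Ω₀
      have : (-k) • (1 : ℝ) + x = x - (k : ℝ) := by
        rw [zsmul_eq_mul]; push_cast; ring
      rw [this]; exact hk
    · intro g g' hgg'
      obtain ⟨k, hk⟩ := AddSubgroup.mem_zmultiples_iff.mp g.2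
      obtain ⟨k', hk'⟩ := AddSubgroup.mem_zmultiples_iff.mp g'.2
      have hkr : (g : ℝ) = (k : ℝ) := by rw [← hk, zsmul_eq_mul]; ring
      have hkr' : (g' : ℝ) = (k' : ℝ) := by rw [← hk', zsmul_eq_mul]; ring
      have hkk' : k ≠ k' := by
        rintro rfl
        exact hgg' (Subtype.ext (by rw [← hk, ← hk']))
      have him : ∀ (h : AddSubgroup.zmultiples (1 : ℝ)),
          (fun g : AddSubgroup.zmultiples (1 : ℝ) => g +ᵥ Ω₀) h = tr ((h : ℝ)) Ω₀ := by
        intro h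
        ext x
        rw [mem_tr]
        constructor
        · rintro ⟨a, ha, rfl⟩
          show (h : ℝ) + a - (h : ℝ) ∈ Ω₀
          simpa using ha
        · intro hx
          exact ⟨x - (h : ℝ), hx, by show (h:ℝ) + (x - (h:ℝ)) = x; ring⟩
      show volume ((fun g : AddSubgroup.zmultiples (1:ℝ) => g +ᵥ Ω₀) g ∩
        (fun g : AddSubgroup.zmultiples (1:ℝ) => g +ᵥ Ω₀) g') = 0
      rw [him g, him g', hkr, hkr']
      exact hZdisj k k' hkk'
  have hIoc := isAddFundamentalDomain_Ioc one_pos 0 (volume : Measure ℝ)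
  have := hfd.measure_eq hIoc
  rw [this]
  simp
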